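/- arXiv:0912.3848 — 4 statements merged into one kernel-verified Lean document; each statement's English description precedes it below -/
import Mathlib

section
/- Let G be a finite connected weighted graph on N vertices with graph Laplacian L having orthonormal eigenvectors χ_ℓ and eigenvalues λ_ℓ with largest eigenvalue λ_{N−1}. Let K ≥ 1 be an integer and let g : [0,∞) → ℝ be (K+1) times continuously differentiable with g(0) = 0, g^{(r)}(0) = 0 for 1 ≤ r < K, g^{(K)}(0) ≠ 0, and |g^{(K+1)}(λ)| ≤ B for all λ ∈ [0, t' λ_{N−1}] for some t' > 0 and B ≥ 0. Let m, n be vertices with d_G(m,n) > K and L^K δ_n ≠ 0. Then there exist constants D > 0 and t'' > 0 such that ψ_{t,n}(m) / ‖ψ_{t,n}‖_2 ≤ D·t for all 0 < t < min(t', t''). Explicitly one may take D = 2C'K!/(|g^{(K)}(0)| ‖L^K δ_n‖) with C' = λ_{N−1}^{K+1} B/(K+1)!, and t'' = |g^{(K)}(0)| ‖L^K δ_n‖ (K+1) / (2√N λ_{N−1}^{K+1} B). -/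
open Finset Set Matrix
open scoped Nat

/-!
In the eigenbasis, `ψ_{t,n} = g(tL) δₙ`. Taylor's theorem with Lagrange remainder gives
`g x = c xᴷ + O(x^(K+1))` on the spectrum of `tL`, with `c = g⁽ᴷ⁾(0)/K!`, so by Parseval
`ψ_{t,n} = c tᴷ Lᴷ δₙ + r` with `‖r‖ ≤ C' t^(K+1)`. The entry `(Lᴷ)ₘₙ` vanishes unless `m` and `n`
are joined by a walk of length at most `K`, hence `ψ_{t,n}(m) = r(m) = O(t^(K+1))`, while
`‖ψ_{t,n}‖ ≥ |c| tᴷ ‖Lᴷ δₙ‖ - C' t^(K+1)` is of exact order `tᴷ` for small `t`.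
The spectrum of `L` is nonnegative by Gershgorin's theorem, which keeps `tλ` inside the interval
where the bound on `g⁽ᴷ⁺¹⁾` holds.
-/

theorem taylorWithinEval_eq_monomial_of_iteratedDeriv_eq_zero {g : ℝ → ℝ} {K : ℕ}
    (hg : ContDiff ℝ K g) (hvanish : ∀ k < K, iteratedDeriv k g 0 = 0) {s : Set ℝ}
    (hs : UniqueDiffOn ℝ s) (h0 : (0 : ℝ) ∈ s) (x : ℝ) :
    taylorWithinEval g K s 0 x = iteratedDeriv K g 0 / K ! * x ^ K := by
  have hwithin : ∀ k ≤ K, iteratedDerivWithin k g s 0 = iteratedDeriv k g 0 := fun k hk =>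
    iteratedDerivWithin_eq_iteratedDeriv hs ((hg.of_le (by exact_mod_cast hk)).contDiffAt) h0
  rw [taylor_within_apply, Finset.sum_range_succ, Finset.sum_eq_zero fun k hk => ?_]
  · rw [hwithin K le_rfl, smul_eq_mul, sub_zero]
    ring
  · have hk : k < K := Finset.mem_range.1 hk
    rw [hwithin k hk.le, hvanish k hk, smul_zero]

theorem abs_sub_monomial_le_of_iteratedDeriv_eq_zero {g : ℝ → ℝ} {K : ℕ}
    (hg : ContDiff ℝ (K + 1 : ℕ) g) (hvanish : ∀ k < K, iteratedDeriv k g 0 = 0)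
    {B x : ℝ} (hx : 0 ≤ x)
    (hbound : ∀ y ∈ Icc 0 x, |iteratedDeriv (K + 1) g y| ≤ B) :
    |g x - iteratedDeriv K g 0 / K ! * x ^ K| ≤ B * x ^ (K + 1) / (K + 1)! := by
  have hgK : ContDiff ℝ K g := hg.of_le (by exact_mod_cast K.le_succ)
  rcases hx.eq_or_lt with rfl | hx
  · rw [← taylorWithinEval_eq_monomial_of_iteratedDeriv_eq_zero hgK hvanish uniqueDiffOn_univ
      (mem_univ 0), taylorWithinEval_self]
    simp
  obtain ⟨y, hy, hrem⟩ := taylor_mean_remainder_lagrange_iteratedDeriv hx.ne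
    (hg.contDiffOn (n := ((K + 1 : ℕ) : WithTop ℕ∞)))
  rw [uIcc_of_le hx.le, taylorWithinEval_eq_monomial_of_iteratedDeriv_eq_zero hgK hvanish
    (uniqueDiffOn_Icc hx) ⟨le_rfl, hx.le⟩] at hrem
  rw [uIoo_of_le hx.le] at hy
  rw [hrem, sub_zero, abs_div, abs_mul, abs_pow, abs_of_pos hx, Nat.abs_cast]
  gcongr
  exact hbound y (Ioo_subset_Icc_self hy)

namespace Matrix

variable {ι : Type*} [Fintype ι] [DecidableEq ι]

theorem exists_walk_of_pow_apply_ne_zero {R : Type*} [Semiring R] {M : Matrix ι ι R}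
    {Adj : ι → ι → Prop} (hM : ∀ i j, i ≠ j → M i j ≠ 0 → Adj i j) (n : ι) :
    ∀ (r : ℕ) (m : ι), (M ^ r) m n ≠ 0 → ∃ r' ≤ r, ∃ w : Fin (r' + 1) → ι,
      w 0 = m ∧ w (Fin.last r') = n ∧ ∀ i : Fin r', Adj (w i.castSucc) (w i.succ)
  | 0, m, h => by
    obtain rfl : m = n := by_contra fun hmn => h (by rw [pow_zero, one_apply_ne hmn])
    exact ⟨0, le_rfl, fun _ => m, rfl, rfl, Fin.elim0⟩
  | r + 1, m, h => by
    rw [pow_succ', mul_apply] at h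
    obtain ⟨k, -, hk⟩ := Finset.exists_ne_zero_of_sum_ne_zero h
    obtain ⟨r', hr', w, rfl, hwn, hw⟩ :=
      exists_walk_of_pow_apply_ne_zero hM n r k (right_ne_zero_of_mul hk)
    by_cases hmk : m = w 0
    · exact ⟨r', hr'.trans r.le_succ, w, hmk.symm, hwn, hw⟩
    refine ⟨r' + 1, by omega, Fin.cons m w, rfl, by rwa [← Fin.succ_last, Fin.cons_succ], ?_⟩
    intro i
    induction i using Fin.cases with
    | zero => exact hM m (w 0) hmk (left_ne_zero_of_mul hk)
    | succ j => simpa only [← Fin.succ_castSucc, Fin.cons_succ] using hw j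

def laplacian (A : Matrix ι ι ℝ) : Matrix ι ι ℝ :=
  diagonal (fun i => ∑ j, A i j) - A

theorem exists_walk_of_laplacian_pow_apply_ne_zero {A : Matrix ι ι ℝ} (hA : ∀ i j, 0 ≤ A i j)
    {r : ℕ} {m n : ι} (h : (laplacian A ^ r) m n ≠ 0) :
    ∃ r' ≤ r, ∃ w : Fin (r' + 1) → ι,
      w 0 = m ∧ w (Fin.last r') = n ∧ ∀ i : Fin r', 0 < A (w i.castSucc) (w i.succ) :=
  exists_walk_of_pow_apply_ne_zero (Adj := fun i j => 0 < A i j) (fun i j hij hL => by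
    simpa [laplacian, diagonal_apply_ne _ hij, (hA i j).lt_iff_ne', eq_comm] using hL) n r m h

-- Gershgorin: the `k`-th disc has centre `∑ j ≠ k, A k j` and radius the same number.
theorem nonneg_of_laplacian_mulVec_eq_smul {A : Matrix ι ι ℝ} (hA : ∀ i j, 0 ≤ A i j)
    {v : ι → ℝ} {μ : ℝ} (hv : v ≠ 0) (h : laplacian A *ᵥ v = μ • v) : 0 ≤ μ := by
  obtain ⟨k, hk⟩ := eigenvalue_mem_ball
    (Module.End.hasEigenvalue_of_hasEigenvector ⟨Module.End.mem_eigenspace_iff.2 h, hv⟩)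
  have hradius : ∑ j ∈ univ.erase k, ‖laplacian A k j‖ = ∑ j ∈ univ.erase k, A k j :=
    Finset.sum_congr rfl fun j hj => by
      rw [laplacian, sub_apply, diagonal_apply_ne _ (Finset.ne_of_mem_erase hj).symm, zero_sub,
        norm_neg, Real.norm_of_nonneg (hA k j)]
  rw [hradius, Metric.mem_closedBall, Real.dist_eq, laplacian, sub_apply, diagonal_apply_eq,
    ← Finset.add_sum_erase _ _ (mem_univ k), add_sub_cancel_left] at hk
  linarith [neg_abs_le (μ - ∑ j ∈ univ.erase k, A k j)]

theorem pow_mulVec_eq_pow_smul {R : Type*} [CommSemiring R] {M : Matrix ι ι R} {v : ι → R}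
    {μ : R} (h : M *ᵥ v = μ • v) (r : ℕ) : M ^ r *ᵥ v = μ ^ r • v := by
  induction r with
  | zero => simp
  | succ r ih => rw [pow_succ, ← mulVec_mulVec, h, mulVec_smul, ih, smul_smul, pow_succ']

end Matrix

section OrthonormalRows

variable {ι : Type*} [Fintype ι] {chi : ι → ι → ℝ}

/-- The vector `f(L) δₙ`, for `L` diagonalised by the orthonormal eigenvectors `chi ℓ`. -/
noncomputable def spectralVec (chi : ι → ι → ℝ) (f : ι → ℝ) (n : ι) : EuclideanSpace ℝ ι :=
  ∑ ℓ, (f ℓ * chi ℓ n) • WithLp.toLp 2 (chi ℓ)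

theorem spectralVec_apply (f : ι → ℝ) (n i : ι) :
    spectralVec chi f n i = ∑ ℓ, f ℓ * chi ℓ n * chi ℓ i := by
  simp [spectralVec]

theorem spectralVec_sub (f h : ι → ℝ) (n : ι) :
    spectralVec chi (f - h) n = spectralVec chi f n - spectralVec chi h n := by
  simp only [spectralVec, Pi.sub_apply, sub_mul, sub_smul, Finset.sum_sub_distrib]

theorem spectralVec_smul (a : ℝ) (f : ι → ℝ) (n : ι) :
    spectralVec chi (a • f) n = a • spectralVec chi f n := by
  simp only [spectralVec, Pi.smul_apply, smul_eq_mul, Finset.smul_sum, smul_smul, mul_assoc]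

variable [DecidableEq ι]

theorem sum_mul_eq_ite_of_orthonormal_rows
    (horth : ∀ k l, ∑ i, chi k i * chi l i = if k = l then 1 else 0) (i j : ι) :
    ∑ ℓ, chi ℓ i * chi ℓ j = if i = j then 1 else 0 := by
  have hU : Matrix.of chi * (Matrix.of chi).transpose = 1 := by
    ext k l
    simpa [Matrix.mul_apply, Matrix.one_apply] using horth k l
  have hU' : (Matrix.of chi).transpose * Matrix.of chi = 1 := mul_eq_one_comm.1 hU
  simpa [Matrix.mul_apply, Matrix.one_apply] using congrFun (congrFun hU' i) j

theorem orthonormal_toLp_of_orthonormal_rows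
    (horth : ∀ k l, ∑ i, chi k i * chi l i = if k = l then 1 else 0) :
    Orthonormal ℝ fun ℓ => WithLp.toLp 2 (chi ℓ) :=
  orthonormal_iff_ite.2 fun k l => by
    simpa [PiLp.inner_apply, mul_comm] using horth k l

theorem norm_spectralVec_le
    (horth : ∀ k l, ∑ i, chi k i * chi l i = if k = l then 1 else 0) {f : ι → ℝ} {ε : ℝ}
    (hf : ∀ ℓ, |f ℓ| ≤ ε) (n : ι) : ‖spectralVec chi f n‖ ≤ ε := by
  have hε : 0 ≤ ε := (abs_nonneg _).trans (hf n)
  have hsq : ‖spectralVec chi f n‖ ^ 2 = ∑ ℓ, f ℓ ^ 2 * chi ℓ n ^ 2 := by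
    rw [← real_inner_self_eq_norm_sq, spectralVec,
      (orthonormal_toLp_of_orthonormal_rows horth).inner_sum]
    exact Finset.sum_congr rfl fun ℓ _ => by simp only [conj_trivial]; ring
  have hcol : ∑ ℓ, chi ℓ n ^ 2 = 1 := by
    simpa [sq] using sum_mul_eq_ite_of_orthonormal_rows horth n n
  refine pow_le_pow_iff_left₀ (norm_nonneg _) hε two_ne_zero |>.1 ?_
  calc ‖spectralVec chi f n‖ ^ 2 = ∑ ℓ, f ℓ ^ 2 * chi ℓ n ^ 2 := hsq
    _ ≤ ∑ ℓ, ε ^ 2 * chi ℓ n ^ 2 := Finset.sum_le_sum fun ℓ _ =>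
      mul_le_mul_of_nonneg_right (sq_le_sq' (abs_le.1 (hf ℓ)).1 (abs_le.1 (hf ℓ)).2) (sq_nonneg _)
    _ = ε ^ 2 := by rw [← Finset.mul_sum, hcol, mul_one]

theorem toLp_pow_col_eq_spectralVec
    (horth : ∀ k l, ∑ i, chi k i * chi l i = if k = l then 1 else 0)
    {M : Matrix ι ι ℝ} {lam : ι → ℝ} (heig : ∀ ℓ, M *ᵥ chi ℓ = lam ℓ • chi ℓ) (r : ℕ) (n : ι) :
    WithLp.toLp 2 (fun i => (M ^ r) i n) = spectralVec chi (fun ℓ => lam ℓ ^ r) n := by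
  have hsingle : ∑ ℓ, chi ℓ n • chi ℓ = Pi.single n 1 := by
    ext i
    simpa [Pi.single_apply, eq_comm] using sum_mul_eq_ite_of_orthonormal_rows horth n i
  have hcol : (fun i => (M ^ r) i n) = ∑ ℓ, (lam ℓ ^ r * chi ℓ n) • chi ℓ := by
    rw [show (fun i => (M ^ r) i n) = M ^ r *ᵥ Pi.single n 1 by rw [mulVec_single_one]; rfl,
      ← hsingle, mulVec_sum]
    simp only [mulVec_smul, pow_mulVec_eq_pow_smul (heig _), smul_smul, mul_comm]
  ext i
  rw [hcol, spectralVec_apply]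
  simp

theorem norm_spectralVec_sub_smul_monomial_le
    (horth : ∀ k l, ∑ i, chi k i * chi l i = if k = l then 1 else 0) {lam : ι → ℝ} {Λ : ℝ}
    (hlam0 : ∀ ℓ, 0 ≤ lam ℓ) (hlamΛ : ∀ ℓ, lam ℓ ≤ Λ) {g : ℝ → ℝ} {K : ℕ}
    (hg : ContDiff ℝ (K + 1 : ℕ) g) (hvanish : ∀ k < K, iteratedDeriv k g 0 = 0) {B s t : ℝ}
    (hB : 0 ≤ B) (hbound : ∀ y ∈ Icc 0 (s * Λ), |iteratedDeriv (K + 1) g y| ≤ B) (ht : 0 < t)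
    (hts : t ≤ s) (n : ι) :
    ‖spectralVec chi (fun ℓ => g (t * lam ℓ)) n -
        (iteratedDeriv K g 0 / K ! * t ^ K) • spectralVec chi (fun ℓ => lam ℓ ^ K) n‖ ≤
      Λ ^ (K + 1) * B / (K + 1)! * t ^ (K + 1) := by
  rw [← spectralVec_smul, ← spectralVec_sub]
  refine norm_spectralVec_le horth (fun ℓ => ?_) n
  have hx : 0 ≤ t * lam ℓ := mul_nonneg ht.le (hlam0 ℓ)
  have hxs : t * lam ℓ ≤ s * Λ := mul_le_mul hts (hlamΛ ℓ) (hlam0 ℓ) (ht.le.trans hts)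
  calc |g (t * lam ℓ) - iteratedDeriv K g 0 / K ! * t ^ K * lam ℓ ^ K|
      = |g (t * lam ℓ) - iteratedDeriv K g 0 / K ! * (t * lam ℓ) ^ K| := by
        rw [mul_pow, mul_assoc]
    _ ≤ B * (t * lam ℓ) ^ (K + 1) / (K + 1)! :=
      abs_sub_monomial_le_of_iteratedDeriv_eq_zero hg hvanish hx
        fun y hy => hbound y ⟨hy.1, hy.2.trans hxs⟩
    _ ≤ B * (t * Λ) ^ (K + 1) / (K + 1)! := by gcongr; exact hlamΛ ℓ
    _ = Λ ^ (K + 1) * B / (K + 1)! * t ^ (K + 1) := by rw [mul_pow]; ring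

end OrthonormalRows

theorem div_le_mul_of_le_of_sub_le {a b Q C t : ℝ} {K : ℕ} (hQ : 0 < Q) (hC : 0 ≤ C)
    (ht : 0 < t) (htQ : t < Q / (2 * (C + 1))) (ha : a ≤ C * t ^ (K + 1))
    (hb : Q * t ^ K - C * t ^ (K + 1) ≤ b) : a / b ≤ 2 * (C + 1) / Q * t := by
  have hCt : C * t ≤ Q / 2 := by
    have := (lt_div_iff₀ (by linarith)).1 htQ
    nlinarith
  have hb' : Q / 2 * t ^ K ≤ b := by
    have : C * t ^ (K + 1) ≤ Q / 2 * t ^ K := by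
      rw [pow_succ, mul_comm (t ^ K), ← mul_assoc]
      exact mul_le_mul_of_nonneg_right hCt (pow_nonneg ht.le K)
    linarith
  rw [div_le_iff₀ ((by positivity : 0 < Q / 2 * t ^ K).trans_le hb')]
  calc a ≤ C * t ^ (K + 1) := ha
    _ ≤ (C + 1) * t ^ (K + 1) := by gcongr; linarith
    _ = 2 * (C + 1) / Q * t * (Q / 2 * t ^ K) := by field_simp; ring
    _ ≤ 2 * (C + 1) / Q * t * b := by gcongr

theorem apply_div_norm_le_of_norm_sub_smul_le {ι : Type*} [Fintype ι]
    {x u : EuclideanSpace ℝ ι} {m : ι} (hum : u m = 0) {c C t : ℝ} {K : ℕ} (hC : 0 ≤ C)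
    (ht : 0 < t) (hcu : 0 < |c| * ‖u‖) (htQ : t < |c| * ‖u‖ / (2 * (C + 1)))
    (hx : ‖x - (c * t ^ K) • u‖ ≤ C * t ^ (K + 1)) :
    x m / ‖x‖ ≤ 2 * (C + 1) / (|c| * ‖u‖) * t := by
  refine div_le_mul_of_le_of_sub_le (K := K) hcu hC ht htQ ?_ ?_
  · calc x m = (x - (c * t ^ K) • u) m := by simp [hum]
      _ ≤ ‖x - (c * t ^ K) • u‖ :=
        (le_abs_self _).trans ((Real.norm_eq_abs _).symm.trans_le (PiLp.norm_apply_le _ m))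
      _ ≤ C * t ^ (K + 1) := hx
  · have hlead : ‖(c * t ^ K) • u‖ = |c| * ‖u‖ * t ^ K := by
      rw [norm_smul, Real.norm_eq_abs, abs_mul, abs_pow, abs_of_pos ht]
      ring
    have := norm_sub_le x (x - (c * t ^ K) • u)
    rw [sub_sub_cancel, hlead] at this
    linarith

theorem sgwt_localization_general
    (N : ℕ)
    (A : Matrix (Fin N) (Fin N) ℝ) (hnnA : ∀ i j, 0 ≤ A i j)
    (L : Matrix (Fin N) (Fin N) ℝ)
    (hLdef : L = Matrix.diagonal (fun i => ∑ j, A i j) - A)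
    (lam : Fin N → ℝ) (chi : Fin N → Fin N → ℝ)
    (horth : ∀ k l : Fin N, ∑ i, chi k i * chi l i = if k = l then (1:ℝ) else 0)
    (heig : ∀ ℓ, L.mulVec (chi ℓ) = lam ℓ • chi ℓ)
    (lamMax : ℝ) (hlamMax : ∀ ℓ, lam ℓ ≤ lamMax)
    (K : ℕ)
    (g : ℝ → ℝ) (hg : ContDiff ℝ (K + 1 : ℕ) g) (hg0 : g 0 = 0)
    (hderiv0 : ∀ r : ℕ, 1 ≤ r → r < K → iteratedDeriv r g 0 = 0)
    (hgK : iteratedDeriv K g 0 ≠ 0)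
    (t' B : ℝ) (hB : 0 ≤ B)
    (hbound : ∀ x ∈ Set.Icc (0:ℝ) (t' * lamMax), |iteratedDeriv (K + 1) g x| ≤ B)
    (m n : Fin N)
    (hdist : ¬ ∃ r ≤ K, ∃ w : Fin (r+1) → Fin N,
      w 0 = m ∧ w (Fin.last r) = n ∧ ∀ i : Fin r, 0 < A (w i.castSucc) (w i.succ))
    (hLK : (fun i => (L ^ K) i n) ≠ 0)
    (ψ : ℝ → Fin N → Fin N → ℝ)
    (hψ : ∀ t nn mm, ψ t nn mm = ∑ ℓ, g (t * lam ℓ) * chi ℓ nn * chi ℓ mm) :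
    ∃ D > (0:ℝ), ∃ t'' > (0:ℝ),
      ∀ t : ℝ, 0 < t → t < min t' t'' →
        ψ t n m / Real.sqrt (∑ i, (ψ t n i) ^ 2) ≤ D * t := by
  have hL : L = Matrix.laplacian A := hLdef
  have hlam : ∀ ℓ, 0 ≤ lam ℓ := fun ℓ =>
    Matrix.nonneg_of_laplacian_mulVec_eq_smul hnnA
      (fun h => (orthonormal_toLp_of_orthonormal_rows horth).ne_zero ℓ (by simp [h]))
      (hL ▸ heig ℓ)
  have hvanish : ∀ k < K, iteratedDeriv k g 0 = 0 := fun k hk =>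
    k.eq_zero_or_pos.elim (fun h => by rwa [h, iteratedDeriv_zero]) (hderiv0 k · hk)
  have hLKmn : (L ^ K) m n = 0 :=
    by_contra fun h => hdist (Matrix.exists_walk_of_laplacian_pow_apply_ne_zero hnnA (hL ▸ h))
  set u : EuclideanSpace ℝ (Fin N) := WithLp.toLp 2 fun i => (L ^ K) i n
  have hu : 0 < ‖u‖ := norm_pos_iff.2 fun h => hLK (congrArg WithLp.ofLp h)
  set c := iteratedDeriv K g 0 / (K ! : ℝ)
  set C' := lamMax ^ (K + 1) * B / ((K + 1)! : ℝ)
  have hC' : 0 ≤ C' := by have := (hlam n).trans (hlamMax n); positivity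
  have hQ : 0 < |c| * ‖u‖ := mul_pos (abs_pos.2 (div_ne_zero hgK (by positivity))) hu
  refine ⟨2 * (C' + 1) / (|c| * ‖u‖), by positivity, |c| * ‖u‖ / (2 * (C' + 1)), by positivity,
    fun t ht htlt => ?_⟩
  have hψt : WithLp.toLp 2 (ψ t n) = spectralVec chi (fun ℓ => g (t * lam ℓ)) n := by
    ext i
    simp [spectralVec_apply, hψ]
  have hnorm : √(∑ i, ψ t n i ^ 2) = ‖WithLp.toLp 2 (ψ t n)‖ := by
    simp only [EuclideanSpace.norm_eq, Real.norm_eq_abs, sq_abs]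
  rw [hnorm]
  refine apply_div_norm_le_of_norm_sub_smul_le (x := WithLp.toLp 2 (ψ t n)) (K := K) hLKmn hC' ht
    hQ (htlt.trans_le (min_le_right _ _)) ?_
  rw [hψt, show u = _ from toLp_pow_col_eq_spectralVec horth heig K n]
  exact norm_spectralVec_sub_smul_monomial_le horth hlam hlamMax hg hvanish hB hbound ht
    (htlt.trans_le (min_le_left _ _)).le n

/-- Localization of spectral graph wavelets in the fine-scale limit: if the kernel g has
a zero of multiplicity K at the origin and the vertices m, n satisfy d_G(m,n) > K, then
the normalized wavelet value ψ_{t,n}(m)/‖ψ_{t,n}‖ is O(t) as t → 0. -/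
theorem sgwt_localization
    (N : ℕ) (hN : 0 < N)
    (A : Matrix (Fin N) (Fin N) ℝ) (hsymA : A.IsSymm) (hnnA : ∀ i j, 0 ≤ A i j)
    (L : Matrix (Fin N) (Fin N) ℝ)
    (hLdef : L = Matrix.diagonal (fun i => ∑ j, A i j) - A)
    (lam : Fin N → ℝ) (chi : Fin N → Fin N → ℝ)
    (horth : ∀ k l : Fin N, ∑ i, chi k i * chi l i = if k = l then (1:ℝ) else 0)
    (heig : ∀ ℓ, L.mulVec (chi ℓ) = lam ℓ • chi ℓ)
    (lamMax : ℝ) (hlamMaxmem : ∃ ℓ, lam ℓ = lamMax) (hlamMax : ∀ ℓ, lam ℓ ≤ lamMax)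
    (K : ℕ) (hK : 1 ≤ K)
    (g : ℝ → ℝ) (hg : ContDiff ℝ (K + 1 : ℕ) g) (hg0 : g 0 = 0)
    (hderiv0 : ∀ r : ℕ, 1 ≤ r → r < K → iteratedDeriv r g 0 = 0)
    (hgK : iteratedDeriv K g 0 ≠ 0)
    (t' B : ℝ) (ht' : 0 < t') (hB : 0 ≤ B)
    (hbound : ∀ x ∈ Set.Icc (0:ℝ) (t' * lamMax), |iteratedDeriv (K + 1) g x| ≤ B)
    (m n : Fin N)
    (hdist : ¬ ∃ r ≤ K, ∃ w : Fin (r+1) → Fin N,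
      w 0 = m ∧ w (Fin.last r) = n ∧ ∀ i : Fin r, 0 < A (w i.castSucc) (w i.succ))
    (hLK : (fun i => (L ^ K) i n) ≠ 0)
    (ψ : ℝ → Fin N → Fin N → ℝ)
    (hψ : ∀ t nn mm, ψ t nn mm = ∑ ℓ, g (t * lam ℓ) * chi ℓ nn * chi ℓ mm) :
    ∃ D > (0:ℝ), ∃ t'' > (0:ℝ),
      ∀ t : ℝ, 0 < t → t < min t' t'' →
        ψ t n m / Real.sqrt (∑ i, (ψ t n i) ^ 2) ≤ D * t :=
  sgwt_localization_general N A hnnA L hLdef lam chi horth heig lamMax hlamMax K g hg hg0 hderiv0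
    hgK t' B hB hbound m n hdist hLK ψ hψ
end

section
/- Let h, g : [0,∞) → ℝ be kernels and t_1, …, t_J > 0 a set of scales, and define G(λ) = h(λ)² + Σ_{j=1}^J g(t_j λ)². Then for every f ∈ ℝ^N, the sum of squared coefficients Q := Σ_{n=1}^N |S_f(n)|² + Σ_{j=1}^J Σ_{n=1}^N |W_f(t_j,n)|² satisfies Q = Σ_{ℓ=0}^{N−1} G(λ_ℓ) |f̂(ℓ)|². -/
/-! The scaling-function coefficients and each band of wavelet coefficients are the synthesis,
in the orthonormal eigenbasis `χ`, of the spectral coefficients `h(λ_ℓ) f̂(ℓ)` resp.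
`g(t_j λ_ℓ) f̂(ℓ)`. By Parseval their energies are the sums of the squares of these
coefficients, and adding them up over the scaling function and the `J` scales produces `G`. -/

open Matrix

theorem sum_sq_sum_mul_eq_sum_sq_of_orthonormal {R ι κ : Type*} [CommRing R] [Fintype ι]
    [Fintype κ] [DecidableEq ι] (chi : ι → κ → R)
    (horth : ∀ k l, ∑ m, chi k m * chi l m = if k = l then 1 else 0) (c : ι → R) :
    ∑ n, (∑ ℓ, c ℓ * chi ℓ n) ^ 2 = ∑ ℓ, c ℓ ^ 2 := by
  let M : Matrix ι κ R := Matrix.of chi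
  have hM : M * Mᵀ = 1 := by
    ext k l
    simpa [M, Matrix.mul_apply, Matrix.one_apply] using horth k l
  have hsynth : (fun n => ∑ ℓ, c ℓ * chi ℓ n) = c ᵥ* M := by
    ext n
    simp [M, Matrix.vecMul, dotProduct]
  calc ∑ n, (∑ ℓ, c ℓ * chi ℓ n) ^ 2 = (c ᵥ* M) ⬝ᵥ (c ᵥ* M) := by
        rw [← hsynth]
        simp only [dotProduct, sq]
    _ = c ⬝ᵥ c := by
        rw [← dotProduct_mulVec, ← vecMul_transpose, vecMul_vecMul, hM, vecMul_one]
    _ = ∑ ℓ, c ℓ ^ 2 := by simp only [dotProduct, sq]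

theorem sgwt_coefficient_energy_general
    (N : ℕ) (lam : Fin N → ℝ) (chi : Fin N → Fin N → ℝ)
    (horth : ∀ k l : Fin N, ∑ m, chi k m * chi l m = if k = l then (1:ℝ) else 0)
    (J : ℕ) (ts : Fin J → ℝ)
    (g h : ℝ → ℝ)
    (G : ℝ → ℝ) (hGdef : ∀ x, G x = (h x) ^ 2 + ∑ j, (g (ts j * x)) ^ 2)
    (fhat : Fin N → ℝ)
    (W : Fin J → Fin N → ℝ)
    (hW : ∀ j n, W j n = ∑ ℓ, g (ts j * lam ℓ) * fhat ℓ * chi ℓ n)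
    (S : Fin N → ℝ)
    (hS : ∀ n, S n = ∑ ℓ, h (lam ℓ) * fhat ℓ * chi ℓ n) :
    (∑ n, |S n| ^ 2) + ∑ j, ∑ n, |W j n| ^ 2 = ∑ ℓ, G (lam ℓ) * |fhat ℓ| ^ 2 := by
  simp only [sq_abs, hS, hW, sum_sq_sum_mul_eq_sum_sq_of_orthonormal chi horth, hGdef]
  rw [Finset.sum_comm (γ := Fin J), ← Finset.sum_add_distrib]
  refine Finset.sum_congr rfl fun ℓ _ => ?_
  rw [add_mul, Finset.sum_mul]
  simp only [mul_pow]

/-- The total energy of the scaling-function and wavelet coefficients equals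
Σ_ℓ G(λ_ℓ) |f̂(ℓ)|² where G(λ) = h(λ)² + Σ_j g(t_j λ)². -/
theorem sgwt_coefficient_energy
    (N : ℕ) (lam : Fin N → ℝ) (chi : Fin N → Fin N → ℝ)
    (horth : ∀ k l : Fin N, ∑ m, chi k m * chi l m = if k = l then (1:ℝ) else 0)
    (J : ℕ) (ts : Fin J → ℝ) (hts : ∀ j, 0 < ts j)
    (g h : ℝ → ℝ)
    (G : ℝ → ℝ) (hGdef : ∀ x, G x = (h x) ^ 2 + ∑ j, (g (ts j * x)) ^ 2)
    (f : Fin N → ℝ)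
    (fhat : Fin N → ℝ) (hfhat : ∀ ℓ, fhat ℓ = ∑ m, chi ℓ m * f m)
    (W : Fin J → Fin N → ℝ)
    (hW : ∀ j n, W j n = ∑ ℓ, g (ts j * lam ℓ) * fhat ℓ * chi ℓ n)
    (S : Fin N → ℝ)
    (hS : ∀ n, S n = ∑ ℓ, h (lam ℓ) * fhat ℓ * chi ℓ n) :
    (∑ n, |S n| ^ 2) + ∑ j, ∑ n, |W j n| ^ 2 = ∑ ℓ, G (lam ℓ) * |fhat ℓ| ^ 2 :=
  sgwt_coefficient_energy_general N lam chi horth J ts g h G hGdef fhat W hW S hS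
end

section
/- Let h, g : [0,∞) → ℝ be kernels and t_1, …, t_J > 0 a set of scales, and define G(λ) = h(λ)² + Σ_{j=1}^J g(t_j λ)². Set A = min_{λ ∈ [0, λ_{N−1}]} G(λ) and B = max_{λ ∈ [0, λ_{N−1}]} G(λ) (assuming G continuous so these exist). Then the collection F = {φ_n}_{n=1}^N ∪ {ψ_{t_j,n}}_{j=1,…,J; n=1,…,N} is a frame for ℝ^N with frame bounds A and B: for every f ∈ ℝ^N, A‖f‖² ≤ Σ_{n} |⟨f, φ_n⟩|² + Σ_{j,n} |⟨f, ψ_{t_j,n}⟩|² ≤ B‖f‖². -/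
/-!
Writing the eigenvectors as the rows of an orthogonal matrix `U`, each frame element is a
spectral multiplier `Uᵀ diag(c) U`, so the squared inner products of `f` against the `N`
atoms of one kernel sum to `∑ₗ c(λₗ)² f̂(ℓ)²`. Summing over the kernels gives
`∑ₗ G(λₗ) f̂(ℓ)²`, which lies between `A ∑ₗ f̂(ℓ)²` and `B ∑ₗ f̂(ℓ)²`; Parseval identifies
`∑ₗ f̂(ℓ)²` with `‖f‖²`.
-/

open Matrix Finset

namespace Matrix

variable {n : Type*} [Fintype n] [DecidableEq n] {U : Matrix n n ℝ}

lemma sum_sq_mulVec_of_transpose_mul_self (hU : Uᵀ * U = 1) (v : n → ℝ) :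
    ∑ i, (U *ᵥ v) i ^ 2 = ∑ i, v i ^ 2 := by
  have h : U *ᵥ v ⬝ᵥ U *ᵥ v = v ⬝ᵥ v := by
    rw [dotProduct_mulVec, ← vecMul_transpose, vecMul_vecMul, hU, vecMul_one]
  simpa only [dotProduct, sq] using h

lemma transpose_mul_diagonal_mul_apply (U : Matrix n n ℝ) (c : n → ℝ) (i j : n) :
    (Uᵀ * diagonal c * U) i j = ∑ ℓ, c ℓ * U ℓ i * U ℓ j := by
  simp only [mul_apply (M := Uᵀ * diagonal c), mul_diagonal, transpose_apply]
  exact sum_congr rfl fun ℓ _ => by ring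

lemma sum_sq_inner_transpose_mul_diagonal_mul (hU : U * Uᵀ = 1) (c f : n → ℝ) :
    ∑ i, (∑ k, f k * (Uᵀ * diagonal c * U) i k) ^ 2 = ∑ ℓ, c ℓ ^ 2 * (U *ᵥ f) ℓ ^ 2 := by
  have hUt : Uᵀᵀ * Uᵀ = 1 := by rwa [transpose_transpose]
  have hinner : ∀ i, ∑ k, f k * (Uᵀ * diagonal c * U) i k
      = (Uᵀ *ᵥ (diagonal c *ᵥ (U *ᵥ f))) i := by
    intro i
    rw [mulVec_mulVec, mulVec_mulVec, mulVec, dotProduct]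
    exact sum_congr rfl fun k _ => mul_comm _ _
  simp only [hinner, sum_sq_mulVec_of_transpose_mul_self hUt, mulVec_diagonal, mul_pow]

end Matrix

lemma Finset.mul_sum_sq_le_sum_mul_sq {ι : Type*} (s : Finset ι) {w x : ι → ℝ} {A : ℝ}
    (hw : ∀ i ∈ s, A ≤ w i) : A * ∑ i ∈ s, x i ^ 2 ≤ ∑ i ∈ s, w i * x i ^ 2 := by
  rw [mul_sum]
  exact sum_le_sum fun i hi => mul_le_mul_of_nonneg_right (hw i hi) (sq_nonneg _)

lemma Finset.sum_mul_sq_le_mul_sum_sq {ι : Type*} (s : Finset ι) {w x : ι → ℝ} {B : ℝ}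
    (hw : ∀ i ∈ s, w i ≤ B) : ∑ i ∈ s, w i * x i ^ 2 ≤ B * ∑ i ∈ s, x i ^ 2 := by
  rw [mul_sum]
  exact sum_le_sum fun i hi => mul_le_mul_of_nonneg_right (hw i hi) (sq_nonneg _)

theorem sgwt_frame_bounds_general
    (N : ℕ) (lam : Fin N → ℝ) (chi : Fin N → Fin N → ℝ)
    (horth : ∀ k l : Fin N, ∑ m, chi k m * chi l m = if k = l then (1:ℝ) else 0)
    (lamMax : ℝ) (hlam : ∀ ℓ, lam ℓ ∈ Set.Icc (0:ℝ) lamMax)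
    (J : ℕ) (ts : Fin J → ℝ)
    (g h : ℝ → ℝ)
    (G : ℝ → ℝ) (hGdef : ∀ x, G x = (h x) ^ 2 + ∑ j, (g (ts j * x)) ^ 2)
    (hGcont : ContinuousOn G (Set.Icc (0:ℝ) lamMax))
    (A B : ℝ)
    (hA : A = sInf (G '' Set.Icc (0:ℝ) lamMax))
    (hB : B = sSup (G '' Set.Icc (0:ℝ) lamMax))
    (φ : Fin N → Fin N → ℝ)
    (hφ : ∀ n mm, φ n mm = ∑ ℓ, h (lam ℓ) * chi ℓ n * chi ℓ mm)
    (ψ : Fin J → Fin N → Fin N → ℝ)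
    (hψ : ∀ j n mm, ψ j n mm = ∑ ℓ, g (ts j * lam ℓ) * chi ℓ n * chi ℓ mm)
    (f : Fin N → ℝ) :
    A * ∑ i, (f i) ^ 2 ≤
        (∑ n, (∑ i, f i * φ n i) ^ 2) + ∑ j, ∑ n, (∑ i, f i * ψ j n i) ^ 2 ∧
    (∑ n, (∑ i, f i * φ n i) ^ 2) + ∑ j, ∑ n, (∑ i, f i * ψ j n i) ^ 2 ≤
        B * ∑ i, (f i) ^ 2 := by
  set U : Matrix (Fin N) (Fin N) ℝ := Matrix.of chi
  have hU : U * Uᵀ = 1 := by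
    ext k l
    simpa [U, mul_apply, one_apply] using horth k l
  have hφU : ∀ n i, φ n i = (Uᵀ * diagonal (fun ℓ => h (lam ℓ)) * U) n i := fun n i => by
    rw [hφ, transpose_mul_diagonal_mul_apply]; rfl
  have hψU : ∀ j n i, ψ j n i = (Uᵀ * diagonal (fun ℓ => g (ts j * lam ℓ)) * U) n i :=
    fun j n i => by rw [hψ, transpose_mul_diagonal_mul_apply]; rfl
  have hframe : (∑ n, (∑ i, f i * φ n i) ^ 2) + ∑ j, ∑ n, (∑ i, f i * ψ j n i) ^ 2
      = ∑ ℓ, G (lam ℓ) * (U *ᵥ f) ℓ ^ 2 := by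
    simp only [hφU, hψU, sum_sq_inner_transpose_mul_diagonal_mul hU, hGdef, add_mul,
      sum_add_distrib, sum_mul]
    rw [sum_comm (γ := Fin J)]
  have hparseval : ∑ i, f i ^ 2 = ∑ ℓ, (U *ᵥ f) ℓ ^ 2 :=
    (sum_sq_mulVec_of_transpose_mul_self (mul_eq_one_comm.mp hU) f).symm
  have hcompact : IsCompact (G '' Set.Icc 0 lamMax) := isCompact_Icc.image_of_continuousOn hGcont
  rw [hframe, hparseval]
  exact ⟨mul_sum_sq_le_sum_mul_sq _ fun ℓ _ =>
      hA ▸ csInf_le hcompact.bddBelow ⟨lam ℓ, hlam ℓ, rfl⟩,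
    sum_mul_sq_le_mul_sum_sq _ fun ℓ _ =>
      hB ▸ le_csSup hcompact.bddAbove ⟨lam ℓ, hlam ℓ, rfl⟩⟩

/-- The scaling functions together with the spectral graph wavelets at sampled scales
form a frame for ℝ^N with frame bounds A = min G and B = max G over [0, λ_{N−1}],
where G(λ) = h(λ)² + Σ_j g(t_j λ)². -/
theorem sgwt_frame_bounds
    (N : ℕ) (lam : Fin N → ℝ) (chi : Fin N → Fin N → ℝ)
    (horth : ∀ k l : Fin N, ∑ m, chi k m * chi l m = if k = l then (1:ℝ) else 0)
    (lamMax : ℝ) (hlam : ∀ ℓ, lam ℓ ∈ Set.Icc (0:ℝ) lamMax)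
    (J : ℕ) (ts : Fin J → ℝ) (hts : ∀ j, 0 < ts j)
    (g h : ℝ → ℝ)
    (G : ℝ → ℝ) (hGdef : ∀ x, G x = (h x) ^ 2 + ∑ j, (g (ts j * x)) ^ 2)
    (hGcont : ContinuousOn G (Set.Icc (0:ℝ) lamMax))
    (A B : ℝ)
    (hA : A = sInf (G '' Set.Icc (0:ℝ) lamMax))
    (hB : B = sSup (G '' Set.Icc (0:ℝ) lamMax))
    (φ : Fin N → Fin N → ℝ)
    (hφ : ∀ n mm, φ n mm = ∑ ℓ, h (lam ℓ) * chi ℓ n * chi ℓ mm)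
    (ψ : Fin J → Fin N → Fin N → ℝ)
    (hψ : ∀ j n mm, ψ j n mm = ∑ ℓ, g (ts j * lam ℓ) * chi ℓ n * chi ℓ mm)
    (f : Fin N → ℝ) :
    A * ∑ i, (f i) ^ 2 ≤
        (∑ n, (∑ i, f i * φ n i) ^ 2) + ∑ j, ∑ n, (∑ i, f i * ψ j n i) ^ 2 ∧
    (∑ n, (∑ i, f i * φ n i) ^ 2) + ∑ j, ∑ n, (∑ i, f i * ψ j n i) ^ 2 ≤
        B * ∑ i, (f i) ^ 2 :=
  sgwt_frame_bounds_general N lam chi horth lamMax hlam J ts g h G hGdef hGcont A B hA hB φ hφ ψ hψ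
    f
end

section
/- Let λ_max ≥ λ_{N−1} be any upper bound on the spectrum of L, fix t > 0, and let p be a polynomial with B := sup_{x ∈ [0, λ_max]} |g(tx) − p(x)|. Define the approximate wavelet coefficients W̃_f(t,n) = (p(L) f)_n. Then for every f ∈ ℝ^N and every vertex n, |W_f(t,n) − W̃_f(t,n)| ≤ B ‖f‖. -/
/-!
Write the orthonormal eigenvectors as the rows of an orthogonal matrix `U`, so that
`L = Uᵀ diag(λ) U` and hence `p(L) = Uᵀ diag(p(λ)) U`, while the exact coefficients are
`W = Uᵀ diag(g(tλ)) U f`. The error is therefore `Uᵀ diag(g(tλ) - p(λ)) U f`: a diagonal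
multiplier bounded by `B` on the spectrum, conjugated by isometries, and any single entry
of a vector is bounded by its Euclidean norm.
-/

open Matrix Polynomial

theorem Polynomial.aeval_mul_eq_mul_aeval {R A : Type*} [CommSemiring R] [Semiring A]
    [Algebra R A] {a b x : A} (h : a * x = x * b) (p : R[X]) :
    aeval a p * x = x * aeval b p := by
  induction p using Polynomial.induction_on' with
  | add p q hp hq => rw [map_add, map_add, add_mul, mul_add, hp, hq]
  | monomial n r =>
    have hpow : x * b ^ n = a ^ n * x := (SemiconjBy.pow_right h.symm n :)
    rw [aeval_monomial, aeval_monomial, mul_assoc, ← hpow, ← mul_assoc, ← mul_assoc,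
      Algebra.commutes]

namespace Matrix

variable {ι R : Type*} [Fintype ι]

theorem aeval_diagonal [DecidableEq ι] [CommSemiring R] (d : ι → R) (p : R[X]) :
    aeval (diagonal d) p = diagonal fun i => p.eval (d i) := by
  rw [← diagonalAlgHom_apply (R := R), aeval_algHom_apply, aeval_pi_apply]
  simp

theorem aeval_eq_transpose_mul_diagonal_mul [DecidableEq ι] [CommSemiring R]
    {A U : Matrix ι ι R} {d : ι → R} (hU : Uᵀ * U = 1) (hAU : A * Uᵀ = Uᵀ * diagonal d)
    (p : R[X]) : aeval A p = Uᵀ * diagonal (fun i => p.eval (d i)) * U := by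
  rw [← aeval_diagonal, ← aeval_mul_eq_mul_aeval hAU, Matrix.mul_assoc, hU, Matrix.mul_one]

theorem dotProduct_mulVec_self_of_transpose_mul_self [DecidableEq ι] [CommSemiring R]
    {A : Matrix ι ι R} (hA : Aᵀ * A = 1) (v : ι → R) : (A *ᵥ v) ⬝ᵥ (A *ᵥ v) = v ⬝ᵥ v := by
  rw [dotProduct_mulVec, vecMul_mulVec, hA, vecMul_one]

section Ordered

variable [CommRing R] [LinearOrder R] [IsStrictOrderedRing R]

theorem sq_apply_le_dotProduct_self (v : ι → R) (i : ι) : v i ^ 2 ≤ v ⬝ᵥ v := by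
  simpa only [dotProduct, sq] using
    Finset.single_le_sum (fun j _ => mul_self_nonneg (v j)) (Finset.mem_univ i)

theorem dotProduct_self_diagonal_mulVec_le [DecidableEq ι] {d : ι → R} {B : R}
    (hd : ∀ i, |d i| ≤ B) (v : ι → R) :
    (diagonal d *ᵥ v) ⬝ᵥ (diagonal d *ᵥ v) ≤ B ^ 2 * (v ⬝ᵥ v) := by
  simp only [dotProduct, mulVec_diagonal, Finset.mul_sum]
  refine Finset.sum_le_sum fun i _ => ?_
  have hdB : d i ^ 2 ≤ B ^ 2 := sq_le_sq' (abs_le.mp (hd i)).1 (abs_le.mp (hd i)).2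
  nlinarith [mul_self_nonneg (v i)]

theorem sq_transpose_mulVec_diagonal_mulVec_apply_le [DecidableEq ι] {U : Matrix ι ι R}
    (hU : U * Uᵀ = 1) (hU' : Uᵀ * U = 1) {d : ι → R} {B : R} (hd : ∀ i, |d i| ≤ B)
    (v : ι → R) (i : ι) :
    (Uᵀ *ᵥ (diagonal d *ᵥ (U *ᵥ v))) i ^ 2 ≤ B ^ 2 * (v ⬝ᵥ v) :=
  calc _ ≤ (Uᵀ *ᵥ (diagonal d *ᵥ (U *ᵥ v))) ⬝ᵥ (Uᵀ *ᵥ (diagonal d *ᵥ (U *ᵥ v))) :=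
        sq_apply_le_dotProduct_self _ i
    _ = (diagonal d *ᵥ (U *ᵥ v)) ⬝ᵥ (diagonal d *ᵥ (U *ᵥ v)) :=
        dotProduct_mulVec_self_of_transpose_mul_self (by rwa [transpose_transpose]) _
    _ ≤ B ^ 2 * ((U *ᵥ v) ⬝ᵥ (U *ᵥ v)) := dotProduct_self_diagonal_mulVec_le hd _
    _ = B ^ 2 * (v ⬝ᵥ v) := by rw [dotProduct_mulVec_self_of_transpose_mul_self hU']

end Ordered

end Matrix

theorem sgwt_polyapprox_bound_general
    (N : ℕ) (L : Matrix (Fin N) (Fin N) ℝ)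
    (lam : Fin N → ℝ) (chi : Fin N → Fin N → ℝ)
    (horth : ∀ k l : Fin N, ∑ m, chi k m * chi l m = if k = l then (1:ℝ) else 0)
    (heig : ∀ ℓ, L.mulVec (chi ℓ) = lam ℓ • chi ℓ)
    (lamMax : ℝ) (hlam : ∀ ℓ, lam ℓ ∈ Set.Icc (0:ℝ) lamMax)
    (g : ℝ → ℝ) (t : ℝ)
    (p : Polynomial ℝ) (B : ℝ)
    (hB : ∀ x ∈ Set.Icc (0:ℝ) lamMax, |g (t * x) - p.eval x| ≤ B)
    (f : Fin N → ℝ)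
    (fhat : Fin N → ℝ) (hfhat : ∀ ℓ, fhat ℓ = ∑ m, chi ℓ m * f m)
    (W : Fin N → ℝ) (hW : ∀ n, W n = ∑ ℓ, g (t * lam ℓ) * fhat ℓ * chi ℓ n)
    (n : Fin N) :
    |W n - (Polynomial.aeval L p).mulVec f n| ≤ B * Real.sqrt (∑ i, (f i) ^ 2) := by
  set U : Matrix (Fin N) (Fin N) ℝ := of chi
  have hUUt : U * Uᵀ = 1 := by
    ext k l
    simpa [Matrix.mul_apply, one_apply, U] using horth k l
  have hUtU : Uᵀ * U = 1 := mul_eq_one_comm.mp hUUt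
  have hLU : L * Uᵀ = Uᵀ * diagonal lam := by
    ext i ℓ
    rw [mul_diagonal]
    simpa [Matrix.mul_apply, mulVec, dotProduct, mul_comm, U] using congrFun (heig ℓ) i
  have hfhat' : fhat = U *ᵥ f := funext hfhat
  have hWU : W = Uᵀ *ᵥ (diagonal (fun ℓ => g (t * lam ℓ)) *ᵥ fhat) := by
    ext i
    simp only [hW, mulVec, dotProduct, diagonal_apply, ite_mul, zero_mul, Finset.sum_ite_eq,
      Finset.mem_univ, if_true, transpose_apply, of_apply, U]
    exact Finset.sum_congr rfl fun ℓ _ => by ring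
  have hdiff : W - aeval L p *ᵥ f
      = Uᵀ *ᵥ (diagonal (fun ℓ => g (t * lam ℓ) - p.eval (lam ℓ)) *ᵥ (U *ᵥ f)) := by
    rw [hWU, aeval_eq_transpose_mul_diagonal_mul hUtU hLU, ← mulVec_mulVec, ← mulVec_mulVec,
      ← hfhat', ← mulVec_sub, ← sub_mulVec, diagonal_sub]
  have hB0 : 0 ≤ B := (abs_nonneg _).trans (hB (lam n) (hlam n))
  rw [← Pi.sub_apply, hdiff, ← Real.sqrt_sq hB0, ← Real.sqrt_mul (sq_nonneg B)]
  refine Real.abs_le_sqrt ?_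
  simpa only [dotProduct, sq] using
    sq_transpose_mulVec_diagonal_mulVec_apply_le hUUt hUtU (fun ℓ => hB _ (hlam ℓ)) f n

/-- Error bound for the polynomial-approximation (fast) SGWT: if p approximates g(t·)
uniformly within B on [0, λ_max] ⊇ spectrum(L), then the approximate coefficients
(p(L)f)_n differ from the true ones by at most B‖f‖. -/
theorem sgwt_polyapprox_bound
    (N : ℕ) (L : Matrix (Fin N) (Fin N) ℝ)
    (lam : Fin N → ℝ) (chi : Fin N → Fin N → ℝ)
    (horth : ∀ k l : Fin N, ∑ m, chi k m * chi l m = if k = l then (1:ℝ) else 0)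
    (heig : ∀ ℓ, L.mulVec (chi ℓ) = lam ℓ • chi ℓ)
    (lamMax : ℝ) (hlam : ∀ ℓ, lam ℓ ∈ Set.Icc (0:ℝ) lamMax)
    (g : ℝ → ℝ) (t : ℝ) (ht : 0 < t)
    (p : Polynomial ℝ) (B : ℝ)
    (hB : ∀ x ∈ Set.Icc (0:ℝ) lamMax, |g (t * x) - p.eval x| ≤ B)
    (f : Fin N → ℝ)
    (fhat : Fin N → ℝ) (hfhat : ∀ ℓ, fhat ℓ = ∑ m, chi ℓ m * f m)
    (W : Fin N → ℝ) (hW : ∀ n, W n = ∑ ℓ, g (t * lam ℓ) * fhat ℓ * chi ℓ n)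
    (n : Fin N) :
    |W n - (Polynomial.aeval L p).mulVec f n| ≤ B * Real.sqrt (∑ i, (f i) ^ 2) :=
  sgwt_polyapprox_bound_general N L lam chi horth heig lamMax hlam g t p B hB f fhat hfhat W hW n
end
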